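/- arXiv:2512.14438 — 2 statements merged into one kernel-verified Lean document; each statement's English description precedes it below -/
import Mathlib

section
/- For all real x, the Methfessel auxiliary entropy function equals the composed entropy: ∫_x^∞ y·δ̃_FD(y) dy = s_FD(f_FD(x)), where s_FD(f) = -(f log f + (1-f) log(1-f)). -/
noncomputable def fFD (x : ℝ) : ℝ := (Real.exp x + 1)⁻¹

noncomputable def deltaFD (x : ℝ) : ℝ := ((Real.exp x + 1) * (Real.exp (-x) + 1))⁻¹

noncomputable def sFD (f : ℝ) : ℝ := -(f * Real.log f + (1 - f) * Real.log (1 - f))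

/-!
The Fermi–Dirac occupation is the reflected logistic function, `fFD x = σ(-x)`, and `sFD` is the
binary entropy. The derivative of the binary entropy at `f` is `log ((1 - f) / f)`, which at
`f = fFD y` equals `y`; hence `-sFD ∘ fFD` is an antiderivative of `y ↦ y · δ̃_FD(y) = -y · fFD' y`
and vanishes at `+∞`, so the improper integral over `(x, ∞)` is `sFD (fFD x)`. Integrability on
`(0, ∞)` needs no estimate: there the integrand is the nonnegative derivative of a function with a
finite limit.
-/

open Real Filter Topology MeasureTheory Set

lemma Real.log_sigmoid_sub_log_sigmoid_neg (x : ℝ) : log (sigmoid x) - log (sigmoid (-x)) = x := by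
  rw [← sigmoid_mul_rexp_neg, log_mul (sigmoid_pos x).ne' (exp_pos _).ne', log_exp]
  ring

lemma fFD_eq_sigmoid_neg (x : ℝ) : fFD x = sigmoid (-x) := by
  rw [fFD, sigmoid, neg_neg, add_comm]

lemma fFD_eq_sigmoid_comp_neg : fFD = sigmoid ∘ Neg.neg :=
  funext fFD_eq_sigmoid_neg

lemma deltaFD_eq_sigmoid_mul_sigmoid_neg (x : ℝ) : deltaFD x = sigmoid x * sigmoid (-x) := by
  rw [deltaFD, mul_inv, mul_comm, sigmoid_def, sigmoid_def, neg_neg, add_comm 1, add_comm 1]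

lemma sFD_eq_binEntropy : sFD = binEntropy := by
  ext p
  simp only [sFD, binEntropy, log_inv]
  ring

lemma hasDerivAt_fFD (x : ℝ) : HasDerivAt fFD (-deltaFD x) x := by
  have h := (hasDerivAt_sigmoid (-x)).comp x (hasDerivAt_neg x)
  rw [← sigmoid_neg, neg_neg] at h
  rw [fFD_eq_sigmoid_comp_neg, deltaFD_eq_sigmoid_mul_sigmoid_neg]
  exact h.congr_deriv (by ring)

lemma log_one_sub_fFD_sub_log_fFD (x : ℝ) : log (1 - fFD x) - log (fFD x) = x := by
  rw [fFD_eq_sigmoid_neg, ← sigmoid_neg, neg_neg, log_sigmoid_sub_log_sigmoid_neg]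

lemma hasDerivAt_neg_sFD_comp_fFD (x : ℝ) :
    HasDerivAt (fun y => -sFD (fFD y)) (x * deltaFD x) x := by
  have hf₀ : fFD x ≠ 0 := by rw [fFD_eq_sigmoid_neg]; exact (sigmoid_pos _).ne'
  have hf₁ : fFD x ≠ 1 := by rw [fFD_eq_sigmoid_neg]; exact (sigmoid_lt_one _).ne
  have h := ((hasDerivAt_binEntropy hf₀ hf₁).comp x (hasDerivAt_fFD x)).neg
  rw [log_one_sub_fFD_sub_log_fFD, mul_neg, neg_neg] at h
  rwa [sFD_eq_binEntropy]

lemma tendsto_neg_sFD_comp_fFD_atTop : Tendsto (fun y => -sFD (fFD y)) atTop (𝓝 0) := by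
  have hf : Tendsto fFD atTop (𝓝 0) := by
    rw [fFD_eq_sigmoid_comp_neg]
    exact tendsto_sigmoid_atBot.comp tendsto_neg_atTop_atBot
  simpa [sFD_eq_binEntropy] using ((binEntropy_continuous.tendsto 0).comp hf).neg

lemma continuous_deltaFD : Continuous deltaFD := by
  simp only [funext deltaFD_eq_sigmoid_mul_sigmoid_neg]
  fun_prop

lemma deltaFD_pos (x : ℝ) : 0 < deltaFD x := by
  rw [deltaFD_eq_sigmoid_mul_sigmoid_neg]
  exact mul_pos (sigmoid_pos x) (sigmoid_pos (-x))

lemma integrableOn_Ioi_mul_deltaFD (x : ℝ) : IntegrableOn (fun y => y * deltaFD y) (Ioi x) := by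
  have hcont : Continuous fun y => y * deltaFD y := continuous_id.mul continuous_deltaFD
  have hpos : IntegrableOn (fun y => y * deltaFD y) (Ioi 0) :=
    integrableOn_Ioi_deriv_of_nonneg' (fun y _ => hasDerivAt_neg_sFD_comp_fFD y)
      (fun y hy => mul_nonneg (le_of_lt hy) (deltaFD_pos y).le) tendsto_neg_sFD_comp_fFD_atTop
  refine ((hcont.integrableOn_Icc (a := x) (b := 0)).union hpos).mono_set fun y hy => ?_
  rcases le_or_gt y 0 with hy0 | hy0
  · exact Or.inl ⟨le_of_lt hy, hy0⟩
  · exact Or.inr hy0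

theorem sTildeFD_eq_sFD_comp_fFD (x : ℝ) :
    (∫ y in Set.Ioi x, y * deltaFD y) = sFD (fFD x) := by
  rw [integral_Ioi_of_hasDerivAt_of_tendsto' (fun y _ => hasDerivAt_neg_sFD_comp_fFD y)
    (integrableOn_Ioi_mul_deltaFD x) tendsto_neg_sFD_comp_fFD_atTop]
  ring
end

section
/- For any two continuously differentiable, bounded functions h₁, h₂ : ℝ → ℝ with integrable derivatives and with h₁(ε) = h₂(ε) for all ε in a neighborhood (μ - δ, μ + δ) of μ (δ > 0), the difference of the Sommerfeld integrals D(T) = ∫_{-∞}^{∞} (h₁(ε) - h₂(ε))·f_FD((ε-μ)/T) dε minus ∫_{-∞}^{μ}(h₁ - h₂) tends to 0 faster than any power of T as T → 0⁺: for every n, D(T) - ∫_{-∞}^{μ}(h₁(ε)-h₂(ε))dε = o(Tⁿ). -/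
open MeasureTheory Filter Asymptotics

/-!
Since `1 - fFD x = fFD (-x)`, the Fermi kernel `fFD ((ε - μ) / T)` differs from the step
function `1_{ε < μ}` by exactly `fFD (|ε - μ| / T) ≤ exp (-|ε - μ| / T)` in absolute value.
The difference `h₁ - h₂` is bounded and vanishes within `δ` of `μ`, so for `T ≤ 1/2` the
error is at most `M ∫ exp (-|x|) dx · exp (-δ / (2T))`, and `exp (-c / T) = o(Tⁿ)` as `T → 0⁺`.
-/

open Real Set Topology

lemma fFD_pos (x : ℝ) : 0 < fFD x := by
  unfold fFD; positivity

lemma fFD_neg (x : ℝ) : fFD (-x) = 1 - fFD x := by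
  unfold fFD
  rw [exp_neg]
  field_simp
  ring

lemma fFD_le_exp_neg (x : ℝ) : fFD x ≤ exp (-x) := by
  unfold fFD
  rw [exp_neg]
  exact inv_anti₀ (exp_pos x) (le_add_of_nonneg_right zero_le_one)

lemma continuous_fFD : Continuous fFD :=
  (continuous_exp.add continuous_const).inv₀ fun x => (add_pos (exp_pos x) one_pos).ne'

lemma abs_mul_fFD_sub_indicator (g : ℝ → ℝ) (μ T ε : ℝ) :
    |g ε * fFD ((ε - μ) / T) - (Iio μ).indicator g ε| = |g ε| * fFD (|ε - μ| / T) := by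
  rcases lt_or_ge ε μ with h | h
  · have habs : |ε - μ| / T = -((ε - μ) / T) := by rw [abs_of_neg (by linarith), neg_div]
    have h1 : 0 < 1 - fFD ((ε - μ) / T) := by rw [← fFD_neg]; exact fFD_pos _
    rw [indicator_of_mem (mem_Iio.2 h), habs, fFD_neg, ← abs_of_pos h1, ← abs_mul, ← abs_neg]
    ring_nf
  · rw [indicator_of_notMem (notMem_Iio.2 h), sub_zero, abs_mul, abs_of_nonneg (sub_nonneg.2 h),
      abs_of_pos (fFD_pos _)]

lemma norm_integral_sub_integral_le {α E : Type*} [MeasurableSpace α] {ν : Measure α}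
    [NormedAddCommGroup E] [NormedSpace ℝ E] {u v : α → E} {b : α → ℝ} (hb : Integrable b ν)
    (huv : AEStronglyMeasurable (fun x => u x - v x) ν) (hle : ∀ᵐ x ∂ν, ‖u x - v x‖ ≤ b x) :
    ‖∫ x, u x ∂ν - ∫ x, v x ∂ν‖ ≤ ∫ x, b x ∂ν := by
  have hw : Integrable (fun x => u x - v x) ν := hb.mono' huv hle
  by_cases hv : Integrable v ν
  · rw [← integral_sub ((hw.add hv).congr (ae_of_all _ fun x => sub_add_cancel (u x) (v x))) hv]
    exact norm_integral_le_of_norm_le hb hle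
  · -- Then `u` is not integrable either, and both integrals take the junk value `0`.
    have hu : ¬Integrable u ν := fun hu =>
      hv ((hu.sub hw).congr (ae_of_all _ fun x => sub_sub_cancel (u x) (v x)))
    rw [integral_undef hu, integral_undef hv, sub_zero, norm_zero]
    exact integral_nonneg_of_ae (hle.mono fun x hx => (norm_nonneg _).trans hx)

lemma integrable_exp_neg_abs : Integrable fun x : ℝ => exp (-|x|) :=
  Integrable.of_integral_ne_zero <| by
    rw [integral_comp_abs (f := fun x => exp (-x)), integral_exp_neg_Ioi_zero]
    norm_num

lemma isLittleO_exp_neg_div_pow {c : ℝ} (hc : 0 < c) (n : ℕ) :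
    (fun T => exp (-(c / T))) =o[𝓝[>] 0] fun T => T ^ n := by
  have h := ((isLittleO_pow_exp_pos_mul_atTop n hc).comp_tendsto
    tendsto_inv_nhdsGT_zero).tendsto_div_nhds_zero
  rw [isLittleO_iff_tendsto']
  · refine h.congr' (eventually_mem_nhdsWithin.mono fun T (hT : 0 < T) => ?_)
    simp only [Function.comp_apply, inv_pow, exp_neg, div_eq_mul_inv]
    ring
  · exact eventually_mem_nhdsWithin.mono fun T (hT : 0 < T) h => absurd h (by positivity)

lemma exp_neg_div_le_mul {x δ T : ℝ} (hT₀ : 0 < T) (hT : T ≤ 1 / 2) (hx₀ : 0 ≤ x) (hx : δ ≤ x) :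
    exp (-(x / T)) ≤ exp (-(δ / 2 / T)) * exp (-x) := by
  rw [← exp_add, exp_le_exp, neg_le, neg_add, neg_neg, neg_neg]
  have : δ / 2 + x * T ≤ x := by nlinarith
  calc δ / 2 / T + x = (δ / 2 + x * T) / T := by field_simp
    _ ≤ x / T := by gcongr

section SommerfeldError

variable {g : ℝ → ℝ} {μ δ M T : ℝ}

lemma norm_mul_fFD_sub_indicator_le (hM : ∀ x, |g x| ≤ M)
    (hg₀ : ∀ ε ∈ Ioo (μ - δ) (μ + δ), g ε = 0) (hT₀ : 0 < T) (hT : T ≤ 1 / 2)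
    (ε : ℝ) :
    ‖g ε * fFD ((ε - μ) / T) - (Iio μ).indicator g ε‖ ≤
      M * exp (-(δ / 2 / T)) * exp (-|ε - μ|) := by
  have hM₀ : 0 ≤ M := (abs_nonneg _).trans (hM ε)
  rw [Real.norm_eq_abs, abs_mul_fFD_sub_indicator]
  by_cases hε : |ε - μ| < δ
  · rw [abs_sub_lt_iff] at hε
    rw [hg₀ ε ⟨by linarith, by linarith⟩, abs_zero, zero_mul]
    positivity
  · calc |g ε| * fFD (|ε - μ| / T) ≤ M * exp (-(|ε - μ| / T)) :=
          mul_le_mul (hM ε) (fFD_le_exp_neg _) (fFD_pos _).le hM₀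
      _ ≤ M * (exp (-(δ / 2 / T)) * exp (-|ε - μ|)) := by
          gcongr
          exact exp_neg_div_le_mul hT₀ hT (abs_nonneg _) (not_lt.1 hε)
      _ = M * exp (-(δ / 2 / T)) * exp (-|ε - μ|) := (mul_assoc _ _ _).symm

lemma norm_sommerfeld_error_le (hg : AEStronglyMeasurable g) (hM : ∀ x, |g x| ≤ M)
    (hg₀ : ∀ ε ∈ Ioo (μ - δ) (μ + δ), g ε = 0) (hT₀ : 0 < T) (hT : T ≤ 1 / 2) :
    ‖(∫ ε, g ε * fFD ((ε - μ) / T)) - ∫ ε in Iio μ, g ε‖ ≤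
      M * (∫ x, exp (-|x|)) * exp (-(δ / 2 / T)) := by
  have hmeas : AEStronglyMeasurable
      (fun ε => g ε * fFD ((ε - μ) / T) - (Iio μ).indicator g ε) :=
    (hg.mul (continuous_fFD.comp (by fun_prop)).aestronglyMeasurable).sub
      (hg.indicator measurableSet_Iio)
  rw [← integral_indicator measurableSet_Iio]
  calc _ ≤ ∫ ε, M * exp (-(δ / 2 / T)) * exp (-|ε - μ|) :=
        norm_integral_sub_integral_le
          ((integrable_exp_neg_abs.comp_sub_right μ).const_mul _) hmeas
          (ae_of_all _ (norm_mul_fFD_sub_indicator_le hM hg₀ hT₀ hT))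
    _ = M * (∫ x, exp (-|x|)) * exp (-(δ / 2 / T)) := by
        rw [integral_const_mul, integral_sub_right_eq_self (fun x => exp (-|x|))]
        ring

end SommerfeldError

theorem sommerfeld_local_insensitivity_general
    (h₁ h₂ : ℝ → ℝ) (μ δ : ℝ) (hδ : 0 < δ)
    (hC1₁ : ContDiff ℝ 1 h₁) (hC1₂ : ContDiff ℝ 1 h₂)
    (hb₁ : ∃ C : ℝ, ∀ x, |h₁ x| ≤ C) (hb₂ : ∃ C : ℝ, ∀ x, |h₂ x| ≤ C)
    (heq : ∀ ε ∈ Set.Ioo (μ - δ) (μ + δ), h₁ ε = h₂ ε) :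
    ∀ n : ℕ,
      (fun T : ℝ =>
          (∫ ε : ℝ, (h₁ ε - h₂ ε) * fFD ((ε - μ) / T)) -
            ∫ ε in Set.Iio μ, (h₁ ε - h₂ ε))
        =o[nhdsWithin 0 (Set.Ioi 0)] fun T : ℝ => T ^ n := by
  obtain ⟨C₁, hC₁⟩ := hb₁
  obtain ⟨C₂, hC₂⟩ := hb₂
  have hM : ∀ x, |h₁ x - h₂ x| ≤ C₁ + C₂ := fun x =>
    (abs_sub _ _).trans (add_le_add (hC₁ x) (hC₂ x))
  have hg₀ : ∀ ε ∈ Ioo (μ - δ) (μ + δ), h₁ ε - h₂ ε = 0 := fun ε hε =>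
    sub_eq_zero.2 (heq ε hε)
  have hg : AEStronglyMeasurable fun ε => h₁ ε - h₂ ε :=
    (hC1₁.continuous.sub hC1₂.continuous).aestronglyMeasurable
  refine fun n => (IsBigO.of_bound ((C₁ + C₂) * ∫ x, exp (-|x|)) ?_).trans_isLittleO
    (isLittleO_exp_neg_div_pow (half_pos hδ) n)
  filter_upwards [Ioc_mem_nhdsGT (by norm_num : (0 : ℝ) < 1 / 2)] with T hT
  rw [Real.norm_of_nonneg (exp_pos _).le]
  exact norm_sommerfeld_error_le hg hM hg₀ hT.1 hT.2

theorem sommerfeld_local_insensitivity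
    (h₁ h₂ : ℝ → ℝ) (μ δ : ℝ) (hδ : 0 < δ)
    (hC1₁ : ContDiff ℝ 1 h₁) (hC1₂ : ContDiff ℝ 1 h₂)
    (hb₁ : ∃ C : ℝ, ∀ x, |h₁ x| ≤ C) (hb₂ : ∃ C : ℝ, ∀ x, |h₂ x| ≤ C)
    (hd₁ : Integrable (deriv h₁)) (hd₂ : Integrable (deriv h₂))
    (heq : ∀ ε ∈ Set.Ioo (μ - δ) (μ + δ), h₁ ε = h₂ ε) :
    ∀ n : ℕ,
      (fun T : ℝ =>
          (∫ ε : ℝ, (h₁ ε - h₂ ε) * fFD ((ε - μ) / T)) -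
            ∫ ε in Set.Iio μ, (h₁ ε - h₂ ε))
        =o[nhdsWithin 0 (Set.Ioi 0)] fun T : ℝ => T ^ n :=
  sommerfeld_local_insensitivity_general h₁ h₂ μ δ hδ hC1₁ hC1₂ hb₁ hb₂ heq
end
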